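/- arXiv:math/0202236 — 2 statements merged into one kernel-verified Lean document; each statement's English description precedes it below -/
import Mathlib

section
/- Let K, T, B > 0. There is a constant β depending only on K, T, B with the following property. Let C : ℝ → ℝ³ be a C⁴ curve parametrized by arclength with C(0) = 0, |C''| ≤ K, |C'''| ≤ T, |C⁗| ≤ B, let x > 0 with K·x ≤ 2/5, let 0 < s₁ ≤ 1.01·x with C'(0) × C'(s₁) ≠ 0, and set p = C(s₁)/|C(s₁)| (the unit chord direction of the edge from C(0) to C(s₁)). Then the spherical area of the region bounded by the tantrix arc {C'(t) : t ∈ [0, s₁]} and the great-circle arcs joining p to C'(0) and to C'(s₁), expressed by the Fuller ribbon integral, satisfies | ∫₀^{s₁} ((C'(t) × p)/(1 + C'(t)·p)) · C''(t) dt | ≤ K·T·x³ + β·x⁴. -/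
/-!
The denominator `1 + C'(t)·p` is at least `1`: `C'(t)` and the chord direction `p` lie within
`Ks₁` and `2Ks₁` of `C'(0)` respectively, so they make an acute angle. The numerator is the triple product
`[C'(t), p, C''(t)]`. Replace `C'(t)`, `C''(t)` and `C(s₁)/s₁` by their Taylor polynomials at `0`
of degrees 2, 1 and 2: in the triple product of these polynomials every term built from
`C'(0)` and `C''(0)` alone cancels, leaving `(s₁t/2 - s₁²/6 - t²/2)·[C'(0), C''(0), C⁽³⁾(0)]`,
of size at most `KTs₁²/6`. Normalising the chord costs a factor `s₁/|C(s₁)| ≤ 2`, and every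
Taylor remainder is `O(s₁³)` with a constant depending only on `K`, `T`, `B` (as `s₁ ≤ 1/K`).
Integrating over `[0, s₁]` and using `s₁ ≤ 1.01x` gives the bound.
-/

noncomputable section

/-- Cross product on `ℝ³`. -/
def cross3 (v w : EuclideanSpace ℝ (Fin 3)) : EuclideanSpace ℝ (Fin 3) :=
  WithLp.toLp 2 ![v 1 * w 2 - v 2 * w 1, v 2 * w 0 - v 0 * w 2, v 0 * w 1 - v 1 * w 0]

/-- Euclidean inner product on `ℝ³`. -/
def dot3 (v w : EuclideanSpace ℝ (Fin 3)) : ℝ := inner ℝ v w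

open Set Finset
open scoped Nat

local notation "ℝ³" => EuclideanSpace ℝ (Fin 3)

section Taylor
variable {E : Type*} [NormedAddCommGroup E] [NormedSpace ℝ E]

theorem iteratedDeriv_iteratedDeriv (k j : ℕ) (f : ℝ → E) :
    iteratedDeriv k (iteratedDeriv j f) = iteratedDeriv (j + k) f := by
  simp only [iteratedDeriv_eq_iterate, add_comm j, Function.iterate_add_apply]

theorem norm_iteratedDeriv_sub_taylor_le {f : ℝ → E} {j n : ℕ} {M t : ℝ}
    (hf : ContDiff ℝ (j + n + 1 : ℕ) f) (hM : ∀ s, ‖iteratedDeriv (j + n + 1) f s‖ ≤ M)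
    (ht : 0 ≤ t) :
    ‖iteratedDeriv j f t -
        ∑ k ∈ range (n + 1), ((k ! : ℝ)⁻¹ * t ^ k) • iteratedDeriv (j + k) f 0‖ ≤
      M * t ^ (n + 1) / n ! := by
  rcases ht.eq_or_lt with rfl | ht
  · simp [Finset.sum_range_succ']
  have hg : ContDiff ℝ (n + 1 : ℕ) (iteratedDeriv j f) := by
    rw [iteratedDeriv_eq_iterate]
    exact ContDiff.iterate_deriv' (n + 1) j (by rwa [show n + 1 + j = j + n + 1 by omega])
  have hwithin : ∀ k ≤ n + 1, ∀ y ∈ Icc 0 t,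
      iteratedDerivWithin k (iteratedDeriv j f) (Icc 0 t) y = iteratedDeriv (j + k) f y := by
    intro k hk y hy
    rw [iteratedDerivWithin_eq_iteratedDeriv (uniqueDiffOn_Icc ht)
      ((hg.of_le (by exact_mod_cast hk)).contDiffAt) hy, iteratedDeriv_iteratedDeriv]
  have := taylor_mean_remainder_bound ht.le hg.contDiffOn (right_mem_Icc.2 ht.le)
    (fun y hy => (hwithin (n + 1) le_rfl y hy).symm ▸ hM y)
  rw [taylor_within_apply, Finset.sum_congr rfl fun k hk => congrArg (_ • ·)
    (hwithin k (Finset.mem_range.1 hk).le 0 (left_mem_Icc.2 ht.le))] at this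
  simpa using this

variable {C : ℝ → E} {K B s t : ℝ}

theorem norm_chord_sub_le (hC : ContDiff ℝ 4 C) (hC0 : C 0 = 0)
    (hK2 : ∀ s, ‖iteratedDeriv 2 C s‖ ≤ K) (hs : 0 ≤ s) : ‖C s - s • deriv C 0‖ ≤ K * s ^ 2 := by
  simpa [Finset.sum_range_succ, hC0] using
    norm_iteratedDeriv_sub_taylor_le (j := 0) (n := 1) (hC.of_le (by norm_num)) hK2 hs

theorem norm_chord_sub_taylor_le (hC : ContDiff ℝ 4 C) (hC0 : C 0 = 0)
    (hB4 : ∀ s, ‖iteratedDeriv 4 C s‖ ≤ B) (hs : 0 ≤ s) :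
    ‖C s - s • (deriv C 0 + (s / 2) • iteratedDeriv 2 C 0 + (s ^ 2 / 6) • iteratedDeriv 3 C 0)‖
      ≤ B * s ^ 4 / 6 := by
  have h := norm_iteratedDeriv_sub_taylor_le (j := 0) (n := 3) (hC.of_le (by norm_num)) hB4 hs
  norm_num [Finset.sum_range_succ, hC0, Nat.factorial] at h
  refine (le_of_eq ?_).trans h
  congr 2
  module

theorem norm_deriv_sub_le (hC : ContDiff ℝ 4 C)
    (hK2 : ∀ s, ‖iteratedDeriv 2 C s‖ ≤ K) (ht : 0 ≤ t) : ‖deriv C t - deriv C 0‖ ≤ K * t := by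
  simpa [Finset.sum_range_succ] using
    norm_iteratedDeriv_sub_taylor_le (j := 1) (n := 0) (hC.of_le (by norm_num)) hK2 ht

theorem norm_deriv_sub_taylor_le (hC : ContDiff ℝ 4 C)
    (hB4 : ∀ s, ‖iteratedDeriv 4 C s‖ ≤ B) (ht : 0 ≤ t) :
    ‖deriv C t - (deriv C 0 + t • iteratedDeriv 2 C 0 + (t ^ 2 / 2) • iteratedDeriv 3 C 0)‖
      ≤ B * t ^ 3 / 2 := by
  have h := norm_iteratedDeriv_sub_taylor_le (j := 1) (n := 2) (hC.of_le (by norm_num)) hB4 ht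
  norm_num [Finset.sum_range_succ, Nat.factorial] at h
  refine (le_of_eq ?_).trans h
  congr 2
  module

theorem norm_iteratedDeriv_two_sub_taylor_le (hC : ContDiff ℝ 4 C)
    (hB4 : ∀ s, ‖iteratedDeriv 4 C s‖ ≤ B) (ht : 0 ≤ t) :
    ‖iteratedDeriv 2 C t - (iteratedDeriv 2 C 0 + t • iteratedDeriv 3 C 0)‖ ≤ B * t ^ 2 := by
  simpa [Finset.sum_range_succ] using
    norm_iteratedDeriv_sub_taylor_le (j := 2) (n := 1) (hC.of_le (by norm_num)) hB4 ht

theorem half_le_norm_chord (hC : ContDiff ℝ 4 C) (hC0 : C 0 = 0) (hunit : ∀ s, ‖deriv C s‖ = 1)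
    (hK2 : ∀ s, ‖iteratedDeriv 2 C s‖ ≤ K) (hs : 0 ≤ s) (hKs : K * s ≤ 1 / 2) :
    s / 2 ≤ ‖C s‖ := by
  have h := (norm_sub_norm_le (s • deriv C 0) (C s)).trans_eq (norm_sub_rev _ _)
  rw [norm_smul, hunit, Real.norm_of_nonneg hs, mul_one] at h
  nlinarith [norm_chord_sub_le hC hC0 hK2 hs]

end Taylor

theorem norm_add_smul_add_smul_le {E : Type*} [SeminormedAddCommGroup E] [NormedSpace ℝ E]
    {e a c : E} {K T s x y : ℝ} (hK : 0 < K) (hKs : K * s ≤ 1) (ha : ‖a‖ ≤ K) (hc : ‖c‖ ≤ T)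
    (hx : |x| ≤ s) (hy : |y| ≤ s ^ 2) :
    ‖e + x • a + y • c‖ ≤ ‖e‖ + K * s * (1 + T / K ^ 2) := by
  have hs : 0 ≤ s := (abs_nonneg x).trans hx
  have hT : 0 ≤ T := (norm_nonneg c).trans hc
  have hTs : s ^ 2 * T ≤ s * T / K := by
    rw [le_div_iff₀ hK]; nlinarith [mul_le_mul_of_nonneg_left hKs (mul_nonneg hs hT)]
  have hsplit : K * s * (1 + T / K ^ 2) = s * K + s * T / K := by field_simp
  calc ‖e + x • a + y • c‖ ≤ ‖e‖ + |x| * ‖a‖ + |y| * ‖c‖ := by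
        refine (norm_add₃_le ..).trans ?_
        simp only [norm_smul, Real.norm_eq_abs, le_refl]
    _ ≤ ‖e‖ + s * K + s ^ 2 * T := by gcongr
    _ ≤ ‖e‖ + K * s * (1 + T / K ^ 2) := by linarith

section InnerProduct
variable {E : Type*} [NormedAddCommGroup E] [InnerProductSpace ℝ E]

theorem norm_inv_norm_smul_sub_le (v e : E) {s : ℝ} (he : ‖e‖ = 1) (hs : 0 < s) :
    ‖‖v‖⁻¹ • v - e‖ ≤ 2 * ‖v - s • e‖ / s := by
  have hsplit : ‖v‖⁻¹ • v - e = (‖v‖⁻¹ - s⁻¹) • v + s⁻¹ • (v - s • e) := by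
    rw [smul_sub, smul_smul, inv_mul_cancel₀ hs.ne', one_smul, sub_smul]; abel
  have hscale : ‖(‖v‖⁻¹ - s⁻¹) • v‖ ≤ ‖v - s • e‖ / s := by
    rcases eq_or_ne v 0 with rfl | hv
    · simp; positivity
    have hse : ‖s • e‖ = s := by rw [norm_smul, he, Real.norm_of_nonneg hs.le, mul_one]
    calc ‖(‖v‖⁻¹ - s⁻¹) • v‖ = |(‖v‖⁻¹ - s⁻¹) * ‖v‖| := by
          rw [norm_smul, Real.norm_eq_abs, abs_mul, abs_norm]
      _ = |s - ‖v‖| / s := by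
          rw [show (‖v‖⁻¹ - s⁻¹) * ‖v‖ = (s - ‖v‖) / s by field_simp, abs_div, abs_of_pos hs]
      _ ≤ ‖v - s • e‖ / s := by
          gcongr; simpa [hse, abs_sub_comm] using abs_norm_sub_norm_le v (s • e)
  have hshift : ‖s⁻¹ • (v - s • e)‖ = ‖v - s • e‖ / s := by
    rw [norm_smul, Real.norm_of_nonneg (inv_nonneg.2 hs.le), inv_mul_eq_div]
  calc ‖‖v‖⁻¹ • v - e‖ ≤ ‖(‖v‖⁻¹ - s⁻¹) • v‖ + ‖s⁻¹ • (v - s • e)‖ := hsplit ▸ norm_add_le _ _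
    _ ≤ ‖v - s • e‖ / s + ‖v - s • e‖ / s := by rw [hshift]; gcongr
    _ = 2 * ‖v - s • e‖ / s := by ring

theorem real_inner_nonneg_of_norm_sub_sq_le_two {u p : E} (hu : ‖u‖ = 1) (hp : ‖p‖ = 1)
    (h : ‖u - p‖ ^ 2 ≤ 2) : 0 ≤ inner ℝ u p := by
  rw [norm_sub_sq_real, hu, hp] at h
  linarith

end InnerProduct

def triple (u v w : ℝ³) : ℝ := dot3 (cross3 u v) w

theorem triple_eq (u v w : ℝ³) : triple u v w =
    (u 1 * v 2 - u 2 * v 1) * w 0 + (u 2 * v 0 - u 0 * v 2) * w 1 +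
      (u 0 * v 1 - u 1 * v 0) * w 2 := by
  simp [triple, dot3, cross3, PiLp.inner_apply, Fin.sum_univ_three, mul_comm]

theorem norm_cross3_sq (u v : ℝ³) : ‖cross3 u v‖ ^ 2 = ‖u‖ ^ 2 * ‖v‖ ^ 2 - inner ℝ u v ^ 2 := by
  simp [EuclideanSpace.norm_sq_eq, cross3, PiLp.inner_apply, Fin.sum_univ_three]
  ring

theorem abs_triple_le (u v w : ℝ³) : |triple u v w| ≤ ‖u‖ * ‖v‖ * ‖w‖ := by
  have hcross : ‖cross3 u v‖ ≤ ‖u‖ * ‖v‖ := by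
    refine le_of_pow_le_pow_left₀ two_ne_zero (by positivity) ?_
    rw [norm_cross3_sq, mul_pow]
    nlinarith [sq_nonneg (inner ℝ u v)]
  calc |triple u v w| ≤ ‖cross3 u v‖ * ‖w‖ := abs_real_inner_le_norm _ _
    _ ≤ ‖u‖ * ‖v‖ * ‖w‖ := by gcongr

theorem triple_sub_triple (u u' p w w' : ℝ³) :
    triple u p w - triple u' p w' = triple u' (p - u') (w - w') + triple (u - u') p w := by
  simp only [triple_eq, PiLp.sub_apply]; ring

theorem abs_triple_sub_le (u u' p w w' : ℝ³) :
    |triple u p w - triple u' p w'| ≤ ‖u'‖ * ‖p - u'‖ * ‖w - w'‖ + ‖u - u'‖ * ‖p‖ * ‖w‖ := by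
  rw [triple_sub_triple]
  exact (abs_add_le _ _).trans (add_le_add (abs_triple_le _ _ _) (abs_triple_le _ _ _))

theorem triple_smul_add_smul (u v z w : ℝ³) (α β : ℝ) :
    triple u (α • v + β • z) w = α * triple u v w + β * triple u z w := by
  simp only [triple_eq, PiLp.add_apply, PiLp.smul_apply, smul_eq_mul]; ring

theorem triple_taylor_model (t₀ a c : ℝ³) (s t : ℝ) :
    triple (t₀ + t • a + (t ^ 2 / 2) • c) (t₀ + (s / 2) • a + (s ^ 2 / 6) • c) (a + t • c) =
      (s * t / 2 - s ^ 2 / 6 - t ^ 2 / 2) * triple t₀ a c := by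
  simp only [triple_eq, PiLp.add_apply, PiLp.smul_apply, smul_eq_mul]; ring

theorem abs_triple_taylor_model_le {t₀ a c : ℝ³} {K T s t : ℝ} (ht₀ : ‖t₀‖ = 1) (ha : ‖a‖ ≤ K)
    (hc : ‖c‖ ≤ T) (ht : t ∈ Icc 0 s) :
    |triple (t₀ + t • a + (t ^ 2 / 2) • c) (t₀ + (s / 2) • a + (s ^ 2 / 6) • c) (a + t • c)| ≤
      K * T / 6 * s ^ 2 := by
  obtain ⟨ht0, hts⟩ := ht
  rw [triple_taylor_model, abs_mul]
  have hf : |s * t / 2 - s ^ 2 / 6 - t ^ 2 / 2| ≤ s ^ 2 / 6 :=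
    abs_le.2 ⟨by nlinarith, by nlinarith⟩
  have hD : |triple t₀ a c| ≤ K * T := by
    refine (abs_triple_le t₀ a c).trans ?_
    rw [ht₀, one_mul]
    exact mul_le_mul ha hc (norm_nonneg c) ((norm_nonneg a).trans ha)
  calc _ ≤ s ^ 2 / 6 * (K * T) := mul_le_mul hf hD (abs_nonneg _) (by positivity)
    _ = _ := by ring

theorem abs_triple_taylor_le {t₀ a c u w : ℝ³} {K T B s t : ℝ} (hK : 0 < K) (hB : 0 ≤ B)
    (ht₀ : ‖t₀‖ = 1) (ha : ‖a‖ ≤ K) (hc : ‖c‖ ≤ T) (hw : ‖w‖ ≤ K)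
    (hu : ‖u - (t₀ + t • a + (t ^ 2 / 2) • c)‖ ≤ B * t ^ 3 / 2)
    (hw' : ‖w - (a + t • c)‖ ≤ B * t ^ 2) (ht : t ∈ Icc 0 s) (hKs : K * s ≤ 1) :
    |triple u (t₀ + (s / 2) • a + (s ^ 2 / 6) • c) w| ≤
      K * T / 6 * s ^ 2 + K * B * (2 + T / K ^ 2) ^ 2 * s ^ 3 := by
  set u₂ := t₀ + t • a + (t ^ 2 / 2) • c
  set w₂ := a + t • c
  set P := t₀ + (s / 2) • a + (s ^ 2 / 6) • c
  set L := 1 + T / K ^ 2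
  obtain ⟨ht0, hts⟩ := ht
  have hs : 0 ≤ s := ht0.trans hts
  have hL : 1 ≤ L := le_add_of_nonneg_right (div_nonneg ((norm_nonneg c).trans hc) (sq_nonneg K))
  have hts2 : t ^ 2 ≤ s ^ 2 := pow_le_pow_left₀ ht0 hts 2
  have hu₂ : ‖u₂‖ ≤ 1 + L := by
    refine (norm_add_smul_add_smul_le hK hKs ha hc (abs_le.2 ⟨by linarith, hts⟩)
      (abs_le.2 ⟨by nlinarith, by nlinarith⟩)).trans ?_
    rw [ht₀]; nlinarith
  have hP : ‖P‖ ≤ 1 + L := by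
    refine (norm_add_smul_add_smul_le hK hKs ha hc (abs_le.2 ⟨by linarith, by linarith⟩)
      (abs_le.2 ⟨by nlinarith, by nlinarith⟩)).trans ?_
    rw [ht₀]; nlinarith
  have hPu₂ : ‖P - u₂‖ ≤ K * s * L := by
    have hdiff : P - u₂ = 0 + (s / 2 - t) • a + (s ^ 2 / 6 - t ^ 2 / 2) • c := by
      simp only [P, u₂]; module
    simpa [hdiff] using norm_add_smul_add_smul_le (e := (0 : ℝ³)) hK hKs ha hc
      (abs_le.2 ⟨by linarith, by linarith⟩) (abs_le.2 ⟨by nlinarith, by nlinarith⟩)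
  have hww₂ : ‖w - w₂‖ ≤ B * s ^ 2 := hw'.trans (by gcongr)
  have huu₂ : ‖u - u₂‖ ≤ B * s ^ 3 / 2 := hu.trans (by gcongr)
  have herr : |triple u P w - triple u₂ P w₂| ≤ K * B * (1 + L) ^ 2 * s ^ 3 := by
    refine (abs_triple_sub_le _ _ _ _ _).trans ?_
    calc ‖u₂‖ * ‖P - u₂‖ * ‖w - w₂‖ + ‖u - u₂‖ * ‖P‖ * ‖w‖
        ≤ (1 + L) * (K * s * L) * (B * s ^ 2) + B * s ^ 3 / 2 * (1 + L) * K := by gcongr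
      _ ≤ K * B * (1 + L) ^ 2 * s ^ 3 := by
        have hKBL : 0 ≤ K * B * s ^ 3 * (1 + L) := by positivity
        nlinarith [mul_le_mul_of_nonneg_left hL hKBL]
  have hmodel : |triple u₂ P w₂| ≤ K * T / 6 * s ^ 2 :=
    abs_triple_taylor_model_le ht₀ ha hc ⟨ht0, hts⟩
  have hA : 2 + T / K ^ 2 = 1 + L := by ring
  rw [hA]
  linarith [abs_sub_abs_le_abs_sub (triple u P w) (triple u₂ P w₂)]

theorem abs_triple_inv_norm_smul_le (u v w P : ℝ³) {s : ℝ} (hs : 0 < s) (hv : s / 2 ≤ ‖v‖)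
    (hu : ‖u‖ = 1) :
    |triple u (‖v‖⁻¹ • v) w| ≤ 2 * |triple u P w| + 2 / s * (‖v - s • P‖ * ‖w‖) := by
  have hv0 : 0 < ‖v‖ := (half_pos hs).trans_le hv
  have hinv : ‖v‖⁻¹ ≤ 2 / s := by
    rw [inv_le_comm₀ hv0 (by positivity), inv_div]; exact hv
  have hratio : ‖v‖⁻¹ * s ≤ 2 := by rwa [← le_div_iff₀ hs]
  have hsplit : ‖v‖⁻¹ • v = (‖v‖⁻¹ * s) • P + ‖v‖⁻¹ • (v - s • P) := by
    rw [smul_sub, smul_smul]; abel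
  rw [hsplit, triple_smul_add_smul]
  refine (abs_add_le _ _).trans (add_le_add ?_ ?_) <;> rw [abs_mul, abs_of_pos (by positivity)]
  · gcongr
  · refine mul_le_mul hinv ((abs_triple_le _ _ _).trans_eq ?_) (abs_nonneg _) (by positivity)
    rw [hu, one_mul]

section Curve
variable {C : ℝ → ℝ³} {K T B s t : ℝ}

theorem one_le_one_add_dot3_chord (hC : ContDiff ℝ 4 C) (hC0 : C 0 = 0)
    (hunit : ∀ s, ‖deriv C s‖ = 1) (hK2 : ∀ s, ‖iteratedDeriv 2 C s‖ ≤ K) (hs : 0 < s)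
    (hKs : K * s ≤ 9 / 20) (ht : t ∈ Icc 0 s) :
    1 ≤ 1 + dot3 (deriv C t) (‖C s‖⁻¹ • C s) := by
  have hK : 0 ≤ K := (norm_nonneg _).trans (hK2 0)
  have hchord := half_le_norm_chord hC hC0 hunit hK2 hs.le (by linarith)
  have hp : ‖‖C s‖⁻¹ • C s - deriv C 0‖ ≤ 2 * K * s := by
    refine (norm_inv_norm_smul_sub_le _ _ (hunit 0) hs).trans ?_
    rw [div_le_iff₀ hs]
    nlinarith [norm_chord_sub_le hC hC0 hK2 hs.le]
  have hu : ‖deriv C t - deriv C 0‖ ≤ K * s :=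
    (norm_deriv_sub_le hC hK2 ht.1).trans (by gcongr; exact ht.2)
  have hup : ‖deriv C t - ‖C s‖⁻¹ • C s‖ ≤ 27 / 20 := by
    calc _ ≤ ‖deriv C t - deriv C 0‖ + ‖deriv C 0 - ‖C s‖⁻¹ • C s‖ :=
          norm_sub_le_norm_sub_add_norm_sub _ _ _
      _ ≤ K * s + 2 * K * s := by rw [norm_sub_rev (deriv C 0)]; gcongr
      _ ≤ 27 / 20 := by linarith
  have hinner := real_inner_nonneg_of_norm_sub_sq_le_two (hunit t)
    (norm_smul_inv_norm (norm_pos_iff.1 ((half_pos hs).trans_le hchord)))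
    ((pow_le_pow_left₀ (norm_nonneg _) hup 2).trans (by norm_num))
  exact le_add_of_nonneg_right hinner

theorem abs_triple_chord_le (hC : ContDiff ℝ 4 C) (hC0 : C 0 = 0)
    (hunit : ∀ s, ‖deriv C s‖ = 1) (hK2 : ∀ s, ‖iteratedDeriv 2 C s‖ ≤ K)
    (hT3 : ∀ s, ‖iteratedDeriv 3 C s‖ ≤ T) (hB4 : ∀ s, ‖iteratedDeriv 4 C s‖ ≤ B) (hK : 0 < K)
    (hs : 0 < s) (hKs : K * s ≤ 1 / 2) (ht : t ∈ Icc 0 s) :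
    |triple (deriv C t) (‖C s‖⁻¹ • C s) (iteratedDeriv 2 C t)| ≤
      K * T / 3 * s ^ 2 + 3 * K * B * (2 + T / K ^ 2) ^ 2 * s ^ 3 := by
  have hB : 0 ≤ B := (norm_nonneg _).trans (hB4 0)
  have hnormalize := abs_triple_inv_norm_smul_le (deriv C t) (C s) (iteratedDeriv 2 C t)
    (deriv C 0 + (s / 2) • iteratedDeriv 2 C 0 + (s ^ 2 / 6) • iteratedDeriv 3 C 0) hs
    (half_le_norm_chord hC hC0 hunit hK2 hs.le hKs) (hunit t)
  have hmodel := abs_triple_taylor_le hK hB (hunit 0) (hK2 0) (hT3 0) (hK2 t)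
    (norm_deriv_sub_taylor_le hC hB4 ht.1) (norm_iteratedDeriv_two_sub_taylor_le hC hB4 ht.1) ht
    (by linarith)
  have hremainder : 2 / s * (‖C s - s • (deriv C 0 + (s / 2) • iteratedDeriv 2 C 0 +
      (s ^ 2 / 6) • iteratedDeriv 3 C 0)‖ * ‖iteratedDeriv 2 C t‖) ≤ K * B / 3 * s ^ 3 := by
    calc _ ≤ 2 / s * (B * s ^ 4 / 6 * K) := by
          gcongr
          exacts [norm_chord_sub_taylor_le hC hC0 hB4 hs.le, hK2 t]
      _ = K * B / 3 * s ^ 3 := by field_simp; ring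
  have hA : 1 ≤ (2 + T / K ^ 2) ^ 2 := by
    have : 0 ≤ T / K ^ 2 := div_nonneg ((norm_nonneg _).trans (hT3 0)) (sq_nonneg K)
    nlinarith
  calc _ ≤ 2 * (K * T / 6 * s ^ 2 + K * B * (2 + T / K ^ 2) ^ 2 * s ^ 3) + K * B / 3 * s ^ 3 :=
        hnormalize.trans (by gcongr)
    _ ≤ _ := by
        have hKBs : 0 ≤ K * B * s ^ 3 := by positivity
        nlinarith [mul_le_mul_of_nonneg_left hA hKBs]

theorem abs_ribbon_integrand_le (hC : ContDiff ℝ 4 C) (hC0 : C 0 = 0)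
    (hunit : ∀ s, ‖deriv C s‖ = 1) (hK2 : ∀ s, ‖iteratedDeriv 2 C s‖ ≤ K)
    (hT3 : ∀ s, ‖iteratedDeriv 3 C s‖ ≤ T) (hB4 : ∀ s, ‖iteratedDeriv 4 C s‖ ≤ B) (hK : 0 < K)
    (hs : 0 < s) (hKs : K * s ≤ 9 / 20) (ht : t ∈ Icc 0 s) :
    |dot3 (cross3 (deriv C t) (‖C s‖⁻¹ • C s)) (iteratedDeriv 2 C t) /
        (1 + dot3 (deriv C t) (‖C s‖⁻¹ • C s))| ≤
      K * T / 3 * s ^ 2 + 3 * K * B * (2 + T / K ^ 2) ^ 2 * s ^ 3 := by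
  have hden := one_le_one_add_dot3_chord hC hC0 hunit hK2 hs hKs ht
  rw [abs_div, abs_of_pos (show 0 < 1 + dot3 (deriv C t) (‖C s‖⁻¹ • C s) by linarith)]
  exact (div_le_self (abs_nonneg _) hden).trans
    (abs_triple_chord_le hC hC0 hunit hK2 hT3 hB4 hK hs (by linarith) ht)

end Curve

theorem ribbon_region_area_bound_general (K T B : ℝ) (hK : 0 < K) :
    ∃ β : ℝ, ∀ (C : ℝ → EuclideanSpace ℝ (Fin 3)) (x s₁ : ℝ),
      ContDiff ℝ 4 C → C 0 = 0 →
      (∀ s : ℝ, ‖deriv C s‖ = 1) →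
      (∀ s : ℝ, ‖iteratedDeriv 2 C s‖ ≤ K) →
      (∀ s : ℝ, ‖iteratedDeriv 3 C s‖ ≤ T) →
      (∀ s : ℝ, ‖iteratedDeriv 4 C s‖ ≤ B) →
      0 < x → K * x ≤ 2 / 5 → 0 < s₁ → s₁ ≤ 1.01 * x →
      cross3 (deriv C 0) (deriv C s₁) ≠ 0 →
      |∫ t in (0:ℝ)..s₁,
          dot3 (cross3 (deriv C t) (‖C s₁‖⁻¹ • C s₁)) (iteratedDeriv 2 C t) /
            (1 + dot3 (deriv C t) (‖C s₁‖⁻¹ • C s₁))| ≤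
        K * T * x ^ 3 + β * x ^ 4 := by
  set γ := 3 * K * B * (2 + T / K ^ 2) ^ 2
  refine ⟨2 * γ, fun C x s₁ hC hC0 hunit hK2 hT3 hB4 hx hKx hs₁ hs₁x _ => ?_⟩
  have hKT : 0 ≤ K * T := mul_nonneg hK.le ((norm_nonneg _).trans (hT3 0))
  have hγ : 0 ≤ γ := by have := (norm_nonneg _).trans (hB4 0); positivity
  have hKs : K * s₁ ≤ 9 / 20 := by nlinarith
  have hintegral := intervalIntegral.norm_integral_le_of_norm_le_const fun t ht =>
    (Real.norm_eq_abs _).trans_le <| abs_ribbon_integrand_le hC hC0 hunit hK2 hT3 hB4 hK hs₁ hKs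
      (Ioc_subset_Icc_self ((uIoc_of_le hs₁.le) ▸ ht))
  rw [Real.norm_eq_abs, sub_zero, abs_of_pos hs₁] at hintegral
  have hs₃ : s₁ ^ 3 ≤ 3 * x ^ 3 := by
    nlinarith [pow_le_pow_left₀ hs₁.le hs₁x 3, pow_pos hx 3]
  have hs₄ : s₁ ^ 4 ≤ 2 * x ^ 4 := by
    nlinarith [pow_le_pow_left₀ hs₁.le hs₁x 4, pow_pos hx 4]
  calc _ ≤ (K * T / 3 * s₁ ^ 2 + γ * s₁ ^ 3) * s₁ := hintegral
    _ = K * T / 3 * s₁ ^ 3 + γ * s₁ ^ 4 := by ring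
    _ ≤ K * T * x ^ 3 + 2 * γ * x ^ 4 := by
        nlinarith [mul_le_mul_of_nonneg_left hs₃ hKT, mul_le_mul_of_nonneg_left hs₄ hγ]

/-- There is a constant `β = β(K,T,B)` such that for any unit-speed `C⁴`
curve `C` with `C 0 = 0`, `|C''| ≤ K`, `|C'''| ≤ T`, `|C⁗| ≤ B`, any `x > 0` with
`K·x ≤ 2/5`, and any `0 < s₁ ≤ 1.01·x` with `C'(0) × C'(s₁) ≠ 0`, the Fuller ribbon
integral against the unit chord direction `p = C s₁/|C s₁|` satisfies
`|∫₀^{s₁} ((C' × p)/(1 + C'·p))·C'' dt| ≤ K·T·x³ + β·x⁴`. -/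
theorem ribbon_region_area_bound (K T B : ℝ) (hK : 0 < K) (hT : 0 < T) (hB : 0 < B) :
    ∃ β : ℝ, ∀ (C : ℝ → EuclideanSpace ℝ (Fin 3)) (x s₁ : ℝ),
      ContDiff ℝ 4 C → C 0 = 0 →
      (∀ s : ℝ, ‖deriv C s‖ = 1) →
      (∀ s : ℝ, ‖iteratedDeriv 2 C s‖ ≤ K) →
      (∀ s : ℝ, ‖iteratedDeriv 3 C s‖ ≤ T) →
      (∀ s : ℝ, ‖iteratedDeriv 4 C s‖ ≤ B) →
      0 < x → K * x ≤ 2 / 5 → 0 < s₁ → s₁ ≤ 1.01 * x →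
      cross3 (deriv C 0) (deriv C s₁) ≠ 0 →
      |∫ t in (0:ℝ)..s₁,
          dot3 (cross3 (deriv C t) (‖C s₁‖⁻¹ • C s₁)) (iteratedDeriv 2 C t) /
            (1 + dot3 (deriv C t) (‖C s₁‖⁻¹ • C s₁))| ≤
        K * T * x ^ 3 + β * x ^ 4 :=
  ribbon_region_area_bound_general K T B hK

end
end

section
/- Let K, T, B > 0. There is a constant β depending only on K, T, B with the following property. Let C : ℝ → ℝ³ be a C⁴ curve parametrized by arclength with C(0) = 0, |C''| ≤ K, |C'''| ≤ T, |C⁗| ≤ B, and let s₁ > 0. Then | C(s₁) · (C'(0) × C'(s₁)) | ≤ β·s₁⁴; that is, the (unnormalized) height of the chord direction C(s₁)/|C(s₁)| above the plane spanned by C'(0) and C'(s₁) is of order s₁⁴. -/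
/-!
With `a = C'(0)`, put `f(t) = C(t) · (a × C'(t))`. Triple products with a repeated vector vanish,
so `f' = C · (a × C'')`, `f'' = C · (a × C''') + C' · (a × C'')` and
`f''' = C · (a × C⁗) + 2 (C' - a) · (a × C''')`; since `C(0) = 0` and `C'(0) = a`,
`f(0) = f'(0) = f''(0) = 0`. Unit speed gives `|C(t)| ≤ t` and `|C'(t) - a| ≤ K t`, hence
`|f'''(t)| ≤ (2KT + B) t`, and integrating three times gives `|f(s₁)| ≤ (2KT + B) s₁⁴ / 24`.
-/

noncomputable section

open WithLp Set
open scoped Matrix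

local notation "ℝ³" => EuclideanSpace ℝ (Fin 3)

theorem cross3_eq_crossProduct (v w : ℝ³) : cross3 v w = toLp 2 (ofLp v ⨯₃ ofLp w) := by
  simp [cross3, cross_apply]

theorem dot3_cross3 (u v w : ℝ³) : dot3 u (cross3 v w) = ofLp u ⬝ᵥ (ofLp v ⨯₃ ofLp w) := by
  rw [dot3, cross3_eq_crossProduct, EuclideanSpace.inner_eq_star_dotProduct, star_trivial,
    dotProduct_comm]

theorem norm_cross3_le (v w : ℝ³) : ‖cross3 v w‖ ≤ ‖v‖ * ‖w‖ := by
  rw [cross3_eq_crossProduct, InnerProductGeometry.norm_ofLp_crossProduct]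
  exact mul_le_of_le_one_right (by positivity) (Real.sin_le_one _)

theorem abs_dot3_cross3_le (u v w : ℝ³) : |dot3 u (cross3 v w)| ≤ ‖v‖ * ‖u‖ * ‖w‖ :=
  calc |dot3 u (cross3 v w)| ≤ ‖u‖ * ‖cross3 v w‖ := abs_real_inner_le_norm _ _
    _ ≤ ‖u‖ * (‖v‖ * ‖w‖) := by gcongr; exact norm_cross3_le v w
    _ = ‖v‖ * ‖u‖ * ‖w‖ := by ring

def tripleProductCLM (a : ℝ³) : ℝ³ →L[ℝ] ℝ³ →L[ℝ] ℝ :=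
  LinearMap.mkContinuous₂
    (LinearMap.mk₂ ℝ (fun u v => dot3 u (cross3 a v))
      (by simp [dot3_cross3, add_dotProduct]) (by simp [dot3_cross3])
      (by simp [dot3_cross3]) (by simp [dot3_cross3]))
    ‖a‖ (fun u v => by simpa using abs_dot3_cross3_le u a v)

theorem tripleProductCLM_self (a v : ℝ³) : tripleProductCLM a v v = 0 :=
  (dot3_cross3 v a v).trans (dot_cross_self _ _)

theorem tripleProductCLM_self_left (a v : ℝ³) : tripleProductCLM a a v = 0 :=
  (dot3_cross3 a a v).trans (dot_self_cross _ _)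

theorem norm_sub_le_mul_of_norm_deriv_le {E : Type*} [NormedAddCommGroup E] [NormedSpace ℝ E]
    {f f' : ℝ → E} {C s : ℝ} (hf : ∀ t, HasDerivAt f (f' t) t) (bound : ∀ t, ‖f' t‖ ≤ C)
    (hs : 0 ≤ s) : ‖f s - f 0‖ ≤ C * s := by
  simpa using norm_image_sub_le_of_norm_deriv_le_segment' (fun t _ => (hf t).hasDerivWithinAt)
    (fun t _ => bound t) s ⟨hs, le_rfl⟩

theorem abs_le_div_mul_pow_succ_of_abs_deriv_le {g g' : ℝ → ℝ} {c r : ℝ} {n : ℕ}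
    (hg : ∀ s, HasDerivAt g (g' s) s) (hg0 : g 0 = 0)
    (hbound : ∀ s ∈ Icc 0 r, |g' s| ≤ c * s ^ n) :
    ∀ s ∈ Icc 0 r, |g s| ≤ c / (n + 1) * s ^ (n + 1) := by
  have hpow (s : ℝ) : HasDerivAt (fun t => c / (n + 1) * t ^ (n + 1)) (c * s ^ n) s := by
    refine ((hasDerivAt_pow (n + 1) s).const_mul (c / (n + 1))).congr_deriv ?_
    push_cast
    field_simp
  simpa only [Real.norm_eq_abs] using
    image_norm_le_of_norm_deriv_right_le_deriv_boundary
      (fun s _ => (hg s).continuousAt.continuousWithinAt)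
      (fun s _ => (hg s).hasDerivWithinAt) (by simp [hg0]) hpow
      (fun s hs => by simpa only [Real.norm_eq_abs] using hbound s (Ico_subset_Icc_self hs))

theorem abs_le_div_mul_pow_four_of_abs_third_deriv_le {g₀ g₁ g₂ g₃ : ℝ → ℝ} {M r : ℝ}
    (h₀ : ∀ s, HasDerivAt g₀ (g₁ s) s) (h₁ : ∀ s, HasDerivAt g₁ (g₂ s) s)
    (h₂ : ∀ s, HasDerivAt g₂ (g₃ s) s) (hg₀ : g₀ 0 = 0) (hg₁ : g₁ 0 = 0) (hg₂ : g₂ 0 = 0)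
    (hg₃ : ∀ s ∈ Icc 0 r, |g₃ s| ≤ M * s) (hr : 0 ≤ r) :
    |g₀ r| ≤ M / 24 * r ^ 4 := by
  have b₂ := abs_le_div_mul_pow_succ_of_abs_deriv_le (n := 1) h₂ hg₂ (by simpa using hg₃)
  have b₁ := abs_le_div_mul_pow_succ_of_abs_deriv_le h₁ hg₁ b₂
  have b₀ := abs_le_div_mul_pow_succ_of_abs_deriv_le h₀ hg₀ b₁ r ⟨hr, le_rfl⟩
  norm_num at b₀
  convert b₀ using 2
  ring

theorem abs_dot3_cross3_le_div_mul_pow_four {γ γ₁ γ₂ γ₃ γ₄ : ℝ → ℝ³} {K T B r : ℝ}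
    (h₀ : ∀ s, HasDerivAt γ (γ₁ s) s) (h₁ : ∀ s, HasDerivAt γ₁ (γ₂ s) s)
    (h₂ : ∀ s, HasDerivAt γ₂ (γ₃ s) s) (h₃ : ∀ s, HasDerivAt γ₃ (γ₄ s) s)
    (hγ0 : γ 0 = 0) (hγ₁ : ∀ s, ‖γ₁ s‖ ≤ 1) (hγ₂ : ∀ s, ‖γ₂ s‖ ≤ K)
    (hγ₃ : ∀ s, ‖γ₃ s‖ ≤ T) (hγ₄ : ∀ s, ‖γ₄ s‖ ≤ B) (hr : 0 ≤ r) :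
    |dot3 (γ r) (cross3 (γ₁ 0) (γ₁ r))| ≤ (2 * K * T + B) / 24 * r ^ 4 := by
  set a := γ₁ 0
  set P := tripleProductCLM a
  have hP (u v : ℝ³) : |P u v| ≤ ‖u‖ * ‖v‖ := by
    refine (abs_dot3_cross3_le u a v).trans ?_
    rw [mul_assoc]
    exact mul_le_of_le_one_left (by positivity) (hγ₁ 0)
  have hPself (v : ℝ³) : P v v = 0 := tripleProductCLM_self a v
  have hPa (v : ℝ³) : P a v = 0 := tripleProductCLM_self_left a v
  have hP' {u v : ℝ → ℝ³} {u' v' : ℝ³} {s : ℝ} (hu : HasDerivAt u u' s)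
      (hv : HasDerivAt v v' s) : HasDerivAt (fun t => P (u t) (v t)) (P (u s) v' + P u' (v s)) s :=
    P.hasDerivAt_of_bilinear (fun _ => hu) (fun _ => hv)
  have hγ (s : ℝ) (hs : 0 ≤ s) : ‖γ s‖ ≤ s := by
    simpa [hγ0] using norm_sub_le_mul_of_norm_deriv_le h₀ hγ₁ hs
  have hγ₁a (s : ℝ) (hs : 0 ≤ s) : ‖γ₁ s - a‖ ≤ K * s :=
    norm_sub_le_mul_of_norm_deriv_le h₁ hγ₂ hs
  refine abs_le_div_mul_pow_four_of_abs_third_deriv_le (g₀ := fun t => P (γ t) (γ₁ t))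
    (g₁ := fun t => P (γ t) (γ₂ t)) (g₂ := fun t => P (γ t) (γ₃ t) + P (γ₁ t) (γ₂ t))
    (g₃ := fun t => P (γ t) (γ₄ t) + 2 * P (γ₁ t - a) (γ₃ t))
    (fun s => ?_) (fun s => hP' (h₀ s) (h₂ s)) (fun s => ?_) (by simp [hγ0]) (by simp [hγ0])
    (by simpa [hγ0] using hPa (γ₂ 0)) (fun s hs => ?_) hr
  · simpa [hPself] using hP' (h₀ s) (h₁ s)
  · refine ((hP' (h₀ s) (h₃ s)).fun_add (hP' (h₁ s) (h₂ s))).congr_deriv ?_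
    simp only [map_sub, _root_.sub_apply, hPself, hPa]
    ring
  · have := hγ s hs.1
    have := hγ₄ s
    have := hγ₃ s
    have hγ₁s := hγ₁a s hs.1
    calc |P (γ s) (γ₄ s) + 2 * P (γ₁ s - a) (γ₃ s)|
        ≤ ‖γ s‖ * ‖γ₄ s‖ + 2 * (‖γ₁ s - a‖ * ‖γ₃ s‖) := by
          refine (abs_add_le _ _).trans (add_le_add (hP _ _) ?_)
          rw [abs_mul, abs_two]
          exact mul_le_mul_of_nonneg_left (hP _ _) zero_le_two
      _ ≤ s * B + 2 * (K * s * T) := by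
          gcongr
          · exact hs.1
          · exact (norm_nonneg _).trans hγ₁s
      _ = (2 * K * T + B) * s := by ring

theorem ContDiff.hasDerivAt_iteratedDeriv {𝕜 E : Type*} [NontriviallyNormedField 𝕜]
    [NormedAddCommGroup E] [NormedSpace 𝕜 E] {f : 𝕜 → E} {n : WithTop ℕ∞} {m : ℕ}
    (hf : ContDiff 𝕜 n f) (hm : m < n) (x : 𝕜) :
    HasDerivAt (iteratedDeriv m f) (iteratedDeriv (m + 1) f x) x := by
  rw [iteratedDeriv_succ]
  exact (hf.differentiable_iteratedDeriv m hm x).hasDerivAt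

theorem chord_height_above_tangent_plane_general (K T B : ℝ) :
    ∃ β : ℝ, ∀ (C : ℝ → EuclideanSpace ℝ (Fin 3)) (s₁ : ℝ),
      ContDiff ℝ 4 C → C 0 = 0 →
      (∀ s : ℝ, ‖deriv C s‖ = 1) →
      (∀ s : ℝ, ‖iteratedDeriv 2 C s‖ ≤ K) →
      (∀ s : ℝ, ‖iteratedDeriv 3 C s‖ ≤ T) →
      (∀ s : ℝ, ‖iteratedDeriv 4 C s‖ ≤ B) →
      0 < s₁ →
      |dot3 (C s₁) (cross3 (deriv C 0) (deriv C s₁))| ≤ β * s₁ ^ 4 := by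
  refine ⟨(2 * K * T + B) / 24, fun C s₁ hC h0 hunit h2 h3 h4 hs₁ => ?_⟩
  have hD (m : ℕ) (hm : m < 4) (s : ℝ) :
      HasDerivAt (iteratedDeriv m C) (iteratedDeriv (m + 1) C s) s :=
    hC.hasDerivAt_iteratedDeriv (by exact_mod_cast hm) s
  refine abs_dot3_cross3_le_div_mul_pow_four (fun s => ?_) (fun s => ?_) (hD 2 (by norm_num))
    (hD 3 (by norm_num)) h0 (fun s => (hunit s).le) h2 h3 h4 hs₁.le
  · simpa using hD 0 (by norm_num) s
  · simpa using hD 1 (by norm_num) s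

/-- There is a constant `β = β(K,T,B)` such that for any unit-speed `C⁴`
curve `C` with `C 0 = 0`, `|C''| ≤ K`, `|C'''| ≤ T`, `|C⁗| ≤ B`, and any `s₁ > 0`,
`|C(s₁)·(C'(0) × C'(s₁))| ≤ β·s₁⁴`: the unnormalized height of the chord direction above
the plane spanned by `C'(0)` and `C'(s₁)` is of order `s₁⁴`. -/
theorem chord_height_above_tangent_plane (K T B : ℝ) (hK : 0 < K) (hT : 0 < T) (hB : 0 < B) :
    ∃ β : ℝ, ∀ (C : ℝ → EuclideanSpace ℝ (Fin 3)) (s₁ : ℝ),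
      ContDiff ℝ 4 C → C 0 = 0 →
      (∀ s : ℝ, ‖deriv C s‖ = 1) →
      (∀ s : ℝ, ‖iteratedDeriv 2 C s‖ ≤ K) →
      (∀ s : ℝ, ‖iteratedDeriv 3 C s‖ ≤ T) →
      (∀ s : ℝ, ‖iteratedDeriv 4 C s‖ ≤ B) →
      0 < s₁ →
      |dot3 (C s₁) (cross3 (deriv C 0) (deriv C s₁))| ≤ β * s₁ ^ 4 :=
  chord_height_above_tangent_plane_general K T B

end
end
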